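/- Let ((ξ_q)_{q∈ℤ^d}, P_θ) be i.i.d. ℝ^d-valued random vectors with density N(d,θ)·exp(−|x|^θ), θ > 0, and let U ⊆ ℝ^d be a bounded open set with U^c (relative to a fixed large box) of finite Lebesgue measure. Then for every ε ∈ (0,1) there is a constant M₁(ε) < ∞ (independent of U) such that P_θ(for all q ∈ U^c ∩ ℤ^d, |ξ_q| > dist(q, ∂U)) ≤ M₁(ε)^{#(U^c ∩ ℤ^d)} · exp(−(1−ε) Σ_{q ∈ U^c ∩ ℤ^d} dist(q, ∂U)^θ). -/

import Mathlib

/-!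
By independence the probability factorizes over the sites `q ∈ S` into tails `P(‖ξ_q‖ > r_q)`.
On `{‖x‖ > r}` one has `exp (-‖x‖^θ) ≤ exp (-(1 - ε) r^θ) · exp (-ε ‖x‖^θ)`, so each tail is at most
`exp (-(1 - ε) r_q^θ)` times `M₁ = N ∫ exp (-ε ‖x‖^θ) dx`, which is finite because `ε > 0`.
-/

open MeasureTheory ProbabilityTheory Real Set

theorem exp_neg_rpow_le_of_lt {r t θ ε : ℝ} (hr : 0 ≤ r) (hrt : r < t) (hθ : 0 ≤ θ) (hε : ε ≤ 1) :
    exp (-t ^ θ) ≤ exp (-(1 - ε) * r ^ θ) * exp (-ε * t ^ θ) := by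
  rw [← exp_add, exp_le_exp]
  have := mul_le_mul_of_nonneg_left (rpow_le_rpow hr hrt.le hθ) (sub_nonneg.mpr hε)
  linarith

theorem continuous_exp_neg_mul_norm_rpow {E : Type*} [SeminormedAddCommGroup E] (b : ℝ) {θ : ℝ}
    (hθ : 0 ≤ θ) : Continuous fun x : E => exp (-b * ‖x‖ ^ θ) :=
  continuous_exp.comp (continuous_const.mul (continuous_norm.rpow_const fun _ => Or.inr hθ))

theorem aemeasurable_of_map_eq_withDensity {α Ω : Type*} [MeasurableSpace α] [MeasurableSpace Ω]
    {μ : Measure α} [NeZero μ] {P : Measure Ω} {X : Ω → α} {f : α → ENNReal}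
    (hf : AEMeasurable f μ) (hf0 : ∀ x, f x ≠ 0) (hX : P.map X = μ.withDensity f) :
    AEMeasurable X P := by
  refine AEMeasurable.of_map_ne_zero fun h => ?_
  rw [hX, withDensity_eq_zero_iff hf] at h
  obtain ⟨x, hx⟩ := h.exists
  exact hf0 x hx

section HaarSpace

variable {E : Type*} [NormedAddCommGroup E] [NormedSpace ℝ E] [FiniteDimensional ℝ E]
  [MeasurableSpace E] [BorelSpace E] (μ : Measure E) [μ.IsAddHaarMeasure]

theorem integrable_exp_neg_mul_norm_rpow {b θ : ℝ} (hb : 0 < b) (hθ : 0 < θ) :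
    Integrable (fun x : E => exp (-b * ‖x‖ ^ θ)) μ := by
  rcases subsingleton_or_nontrivial E with _ | _
  · exact (continuous_exp_neg_mul_norm_rpow b hθ.le).integrable_of_hasCompactSupport
      (HasCompactSupport.of_compactSpace _)
  · rw [integrable_fun_norm_addHaar μ (f := fun y => exp (-b * y ^ θ))]
    refine (integrableOn_rpow_mul_exp_neg_mul_rpow (s := (Module.finrank ℝ E - 1 : ℕ))
      (neg_one_lt_zero.trans_le (Nat.cast_nonneg _)) hθ hb).congr_fun
      (fun y _ => ?_) measurableSet_Ioi
    simp [rpow_natCast]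

theorem integral_exp_neg_mul_norm_rpow_pos {b θ : ℝ} (hb : 0 < b) (hθ : 0 < θ) :
    0 < ∫ x : E, exp (-b * ‖x‖ ^ θ) ∂μ :=
  integral_exp_pos (integrable_exp_neg_mul_norm_rpow μ hb hθ)

theorem withDensity_exp_neg_norm_rpow_norm_gt_le {N θ ε r : ℝ} (hN : 0 ≤ N) (hθ : 0 < θ)
    (hε : ε ∈ Ioo (0 : ℝ) 1) (hr : 0 ≤ r) :
    μ.withDensity (fun x => ENNReal.ofReal (N * exp (-‖x‖ ^ θ))) {x | r < ‖x‖}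
      ≤ ENNReal.ofReal ((N * ∫ x, exp (-ε * ‖x‖ ^ θ) ∂μ) * exp (-(1 - ε) * r ^ θ)) := by
  set c := N * exp (-(1 - ε) * r ^ θ) with hc
  have hint := (integrable_exp_neg_mul_norm_rpow μ hε.1 hθ).const_mul c
  rw [withDensity_apply _ (measurableSet_lt measurable_const measurable_norm)]
  calc ∫⁻ x in {x | r < ‖x‖}, ENNReal.ofReal (N * exp (-‖x‖ ^ θ)) ∂μ
      ≤ ∫⁻ x in {x | r < ‖x‖}, ENNReal.ofReal (c * exp (-ε * ‖x‖ ^ θ)) ∂μ :=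
        setLIntegral_mono (by fun_prop) fun x hx => ENNReal.ofReal_le_ofReal <| by
          rw [mul_assoc]
          exact mul_le_mul_of_nonneg_left (exp_neg_rpow_le_of_lt hr hx hθ.le hε.2.le) hN
    _ ≤ ∫⁻ x, ENNReal.ofReal (c * exp (-ε * ‖x‖ ^ θ)) ∂μ := setLIntegral_le_lintegral _ _
    _ = ENNReal.ofReal ((N * ∫ x, exp (-ε * ‖x‖ ^ θ) ∂μ) * exp (-(1 - ε) * r ^ θ)) := by
        rw [← ofReal_integral_eq_lintegral_ofReal hint (.of_forall fun _ => by positivity),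
          integral_const_mul, hc, mul_right_comm]

theorem measureReal_norm_gt_le_of_map_eq {Ω : Type*} [MeasurableSpace Ω] {P : Measure Ω}
    {X : Ω → E} {N θ ε r : ℝ} (hN : 0 < N) (hθ : 0 < θ) (hε : ε ∈ Ioo (0 : ℝ) 1) (hr : 0 ≤ r)
    (hX : P.map X = μ.withDensity fun x => ENNReal.ofReal (N * exp (-‖x‖ ^ θ))) :
    P.real {ω | r < ‖X ω‖}
      ≤ (N * ∫ x, exp (-ε * ‖x‖ ^ θ) ∂μ) * exp (-(1 - ε) * r ^ θ) := by
  have hXae : AEMeasurable X P := aemeasurable_of_map_eq_withDensity (by fun_prop)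
    (fun x => (ENNReal.ofReal_pos.mpr (by positivity)).ne') hX
  change (P (X ⁻¹' {x | r < ‖x‖})).toReal ≤ _
  rw [← Measure.map_apply_of_aemeasurable hXae (measurableSet_lt measurable_const measurable_norm),
    hX]
  have hJ := integral_exp_neg_mul_norm_rpow_pos μ hε.1 hθ
  exact ENNReal.toReal_le_of_le_ofReal (by positivity)
    (withDensity_exp_neg_norm_rpow_norm_gt_le μ hN.le hθ hε hr)

end HaarSpace

theorem emptiness_probability_upper_bound_general
    (d : ℕ) (θ : ℝ) (hθ : 0 < θ)
    (Ω : Type) [MeasurableSpace Ω] (P : Measure Ω) [IsProbabilityMeasure P]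
    (ξ : (Fin d → ℤ) → Ω → EuclideanSpace ℝ (Fin d)) (N : ℝ)
    (hN : N = (∫ x : EuclideanSpace ℝ (Fin d), Real.exp (-‖x‖ ^ θ))⁻¹)
    (hInd : iIndepFun ξ P)
    (hLaw : ∀ q, Measure.map (ξ q) P
      = volume.withDensity fun x => ENNReal.ofReal (N * Real.exp (-‖x‖ ^ θ)))
    (emb : (Fin d → ℤ) → EuclideanSpace ℝ (Fin d))
    (ε : ℝ) (hε : ε ∈ Set.Ioo (0:ℝ) 1) :
    ∃ M₁ : ℝ, 0 < M₁ ∧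
      ∀ U : Set (EuclideanSpace ℝ (Fin d)), Bornology.IsBounded U → (frontier U).Nonempty →
      ∀ S : Finset (Fin d → ℤ), (∀ q ∈ S, emb q ∉ U) →
        (P {ω | ∀ q ∈ S, Metric.infDist (emb q) (frontier U) < ‖ξ q ω‖}).toReal
          ≤ M₁ ^ S.card
            * Real.exp (-(1 - ε) * ∑ q ∈ S, Metric.infDist (emb q) (frontier U) ^ θ) := by
  have hN0 : 0 < N := hN ▸ inv_pos.mpr (by
    simpa using integral_exp_neg_mul_norm_rpow_pos volume one_pos hθ)
  set M₁ := N * ∫ x : EuclideanSpace ℝ (Fin d), exp (-ε * ‖x‖ ^ θ)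
  refine ⟨M₁, mul_pos hN0 (integral_exp_neg_mul_norm_rpow_pos _ hε.1 hθ), fun U _ _ S _ => ?_⟩
  set r := fun q => Metric.infDist (emb q) (frontier U)
  have hEvent : {ω | ∀ q ∈ S, r q < ‖ξ q ω‖} = ⋂ q ∈ S, {ω | r q < ‖ξ q ω‖} := by
    ext; simp
  calc (P {ω | ∀ q ∈ S, r q < ‖ξ q ω‖}).toReal
      = ∏ q ∈ S, P.real {ω | r q < ‖ξ q ω‖} := by
        rw [hEvent, hInd.meas_biInter (s := fun q => {ω | r q < ‖ξ q ω‖}) fun q _ =>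
          ⟨_, measurableSet_lt measurable_const measurable_norm, rfl⟩, ENNReal.toReal_prod]
        rfl
    _ ≤ ∏ q ∈ S, M₁ * exp (-(1 - ε) * r q ^ θ) :=
        Finset.prod_le_prod (fun _ _ => measureReal_nonneg) fun q _ =>
          measureReal_norm_gt_le_of_map_eq _ hN0 hθ hε Metric.infDist_nonneg (hLaw q)
    _ = _ := by rw [Finset.prod_mul_distrib, Finset.prod_const, Finset.mul_sum, exp_sum]

/-- Upper bound for the probability that all perturbations at lattice points of U^c exceed
the distance to ∂U: for every ε ∈ (0,1) there is M₁(ε) < ∞, independent of U, with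
P(∀ q ∈ U^c ∩ ℤ^d, |ξ_q| > dist(q,∂U)) ≤ M₁^{#(U^c∩ℤ^d)} exp(-(1-ε) Σ dist(q,∂U)^θ). -/
theorem emptiness_probability_upper_bound
    (d : ℕ) (hd : 1 ≤ d) (θ : ℝ) (hθ : 0 < θ)
    (Ω : Type) [MeasurableSpace Ω] (P : Measure Ω) [IsProbabilityMeasure P]
    (ξ : (Fin d → ℤ) → Ω → EuclideanSpace ℝ (Fin d)) (N : ℝ)
    (hN : N = (∫ x : EuclideanSpace ℝ (Fin d), Real.exp (-‖x‖ ^ θ))⁻¹)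
    (hInd : iIndepFun ξ P)
    (hLaw : ∀ q, Measure.map (ξ q) P
      = volume.withDensity fun x => ENNReal.ofReal (N * Real.exp (-‖x‖ ^ θ)))
    (emb : (Fin d → ℤ) → EuclideanSpace ℝ (Fin d)) (hemb : ∀ q i, emb q i = (q i : ℝ))
    (ε : ℝ) (hε : ε ∈ Set.Ioo (0:ℝ) 1) :
    ∃ M₁ : ℝ, 0 < M₁ ∧
      ∀ U : Set (EuclideanSpace ℝ (Fin d)), Bornology.IsBounded U → (frontier U).Nonempty →
      ∀ S : Finset (Fin d → ℤ), (∀ q ∈ S, emb q ∉ U) →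
        (P {ω | ∀ q ∈ S, Metric.infDist (emb q) (frontier U) < ‖ξ q ω‖}).toReal
          ≤ M₁ ^ S.card
            * Real.exp (-(1 - ε) * ∑ q ∈ S, Metric.infDist (emb q) (frontier U) ^ θ) :=
  emptiness_probability_upper_bound_general d θ hθ Ω P ξ N hN hInd hLaw emb ε hε
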